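/- Let P be a set of k ≥ 2 points in the unit square [0,1]² with the Euclidean metric. Then the gap ratio of P satisfies GR_P ≥ 2/√3 − C/√k, where C = 2^{3/2}/3^{3/4}. -/

import Mathlib

open Metric

/-- Minimum gap of a point set `P`: half the least pairwise distance. -/
noncomputable def minGap {E : Type*} [MetricSpace E] (P : Set E) : ℝ :=
  sInf {d : ℝ | ∃ p ∈ P, ∃ q ∈ P, p ≠ q ∧ d = dist p q} / 2

/-- Maximum gap of `P` over the space `X`: the covering radius of `P` in `X`. -/
noncomputable def maxGap {E : Type*} [MetricSpace E] (X P : Set E) : ℝ :=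
  sSup ((fun q => Metric.infDist q P) '' X)

/-- Gap ratio of `P` over the space `X`. -/
noncomputable def gapRatio {E : Type*} [MetricSpace E] (X P : Set E) : ℝ :=
  maxGap X P / minGap P

/-- The unit square in the Euclidean plane. -/
def unitSquare : Set (EuclideanSpace ℝ (Fin 2)) :=
  {x | ∀ i, x i ∈ Set.Icc (0:ℝ) 1}

/-
Write `r`, `R` for the minimum and maximum gap. If some `p ∈ P` has the sphere of radius
`ρ > R` about it inside the square, that sphere is covered by the closed `R`-balls about the
other points of `P`. The sphere is connected, so two of these balls meet on it, at a point `x` within `ρ` of three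
points of `P` that are `2r` apart; since `|a-b|² + |a-c|² + |b-c|² ≤ 9ρ²` for three points in a
`ρ`-ball, `2r ≤ √3 ρ`. Such a `p` exists once `R < 1/4` (take the point nearest the centre), and
otherwise `2r/√3 ≤ 1/4` because for `k > 25` two points share a cell of the `4 × 4` grid.
For `k ≤ 25` the claimed bound is at most `1`, and `R ≥ r` via the midpoint of a closest pair.
-/

section GapInMetricSpace

variable {E : Type*} [MetricSpace E] {P : Set E}

lemma minGap_nonneg (P : Set E) : 0 ≤ minGap P :=
  div_nonneg (Real.sInf_nonneg (by rintro _ ⟨p, -, q, -, -, rfl⟩; exact dist_nonneg)) zero_le_two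

lemma two_mul_minGap_le_dist {p q : E} (hp : p ∈ P) (hq : q ∈ P) (hpq : p ≠ q) :
    2 * minGap P ≤ dist p q := by
  have : sInf {d : ℝ | ∃ p ∈ P, ∃ q ∈ P, p ≠ q ∧ d = dist p q} ≤ dist p q :=
    csInf_le ⟨0, by rintro _ ⟨p, -, q, -, -, rfl⟩; exact dist_nonneg⟩ ⟨p, hp, q, hq, hpq, rfl⟩
  rw [minGap]
  linarith

lemma exists_dist_eq_two_mul_minGap (hfin : P.Finite) (hP : P.Nontrivial) :
    ∃ p ∈ P, ∃ q ∈ P, p ≠ q ∧ dist p q = 2 * minGap P := by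
  have hS : {d : ℝ | ∃ p ∈ P, ∃ q ∈ P, p ≠ q ∧ d = dist p q} =
      (fun z : E × E => dist z.1 z.2) '' P.offDiag := by
    ext d
    simp [Set.mem_offDiag, eq_comm, and_assoc]
  obtain ⟨a, ha, b, hb, hab⟩ := hP
  obtain ⟨p, hp, q, hq, hpq, h⟩ : sInf {d : ℝ | ∃ p ∈ P, ∃ q ∈ P, p ≠ q ∧ d = dist p q} ∈
      {d : ℝ | ∃ p ∈ P, ∃ q ∈ P, p ≠ q ∧ d = dist p q} := by
    rw [hS]
    exact Set.Nonempty.csInf_mem ⟨_, ⟨(a, b), ⟨ha, hb, hab⟩, rfl⟩⟩ (hfin.offDiag.image _)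
  exact ⟨p, hp, q, hq, hpq, by rw [minGap, ← h]; ring⟩

lemma minGap_pos (hfin : P.Finite) (hP : P.Nontrivial) : 0 < minGap P := by
  obtain ⟨p, -, q, -, hpq, h⟩ := exists_dist_eq_two_mul_minGap hfin hP
  linarith [dist_pos.2 hpq]

lemma infDist_le_maxGap {X : Set E} {x : E} (hX : Bornology.IsBounded X) (hP : P.Nonempty)
    (hx : x ∈ X) : infDist x P ≤ maxGap X P := by
  obtain ⟨p, hp⟩ := hP
  obtain ⟨C, hC⟩ := hX.subset_closedBall p
  refine le_csSup ⟨C, ?_⟩ ⟨x, hx, rfl⟩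
  rintro _ ⟨y, hy, rfl⟩
  exact (infDist_le_dist_of_mem hp).trans (hC hy)

end GapInMetricSpace

lemma minGap_le_maxGap {F : Type*} [NormedAddCommGroup F] [NormedSpace ℝ F] {X P : Set F}
    (hXc : Convex ℝ X) (hXb : Bornology.IsBounded X) (hPX : P ⊆ X) (hfin : P.Finite)
    (hP : P.Nontrivial) : minGap P ≤ maxGap X P := by
  obtain ⟨p, hp, q, hq, -, hd⟩ := exists_dist_eq_two_mul_minGap hfin hP
  set m := midpoint ℝ p q
  have hpm : dist p m = minGap P := by rw [dist_left_midpoint, hd]; norm_num; ring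
  refine le_trans ?_ (infDist_le_maxGap hXb hP.nonempty (hXc.midpoint_mem (hPX hp) (hPX hq)))
  refine (le_infDist hP.nonempty).2 fun y hy => ?_
  rcases eq_or_ne y p with rfl | hyp
  · rw [dist_comm, hpm]
  · show minGap P ≤ dist m y
    linarith [two_mul_minGap_le_dist hy hp hyp, dist_triangle y m p, dist_comm m y, dist_comm p m]

section InnerProductSpace

variable {F : Type*} [NormedAddCommGroup F] [InnerProductSpace ℝ F]

lemma norm_sub_sq_add_norm_sub_sq_add_norm_sub_sq_add_norm_add_sq (x y z : F) :
    ‖x - y‖ ^ 2 + ‖x - z‖ ^ 2 + ‖y - z‖ ^ 2 + ‖x + y + z‖ ^ 2 =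
      3 * (‖x‖ ^ 2 + ‖y‖ ^ 2 + ‖z‖ ^ 2) := by
  simp only [norm_sub_sq_real, norm_add_sq_real, inner_add_left]
  ring

lemma le_sqrt_three_mul_of_dist_le {a b c v : F} {δ ρ : ℝ} (hδ : 0 ≤ δ)
    (hab : δ ≤ dist a b) (hac : δ ≤ dist a c) (hbc : δ ≤ dist b c)
    (ha : dist a v ≤ ρ) (hb : dist b v ≤ ρ) (hc : dist c v ≤ ρ) : δ ≤ √3 * ρ := by
  have hρ : 0 ≤ ρ := dist_nonneg.trans ha
  have key := norm_sub_sq_add_norm_sub_sq_add_norm_sub_sq_add_norm_add_sq (a - v) (b - v) (c - v)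
  simp only [sub_sub_sub_cancel_right, ← dist_eq_norm] at key
  have hsq : δ ^ 2 ≤ (√3 * ρ) ^ 2 := by
    rw [mul_pow, Real.sq_sqrt zero_le_three]
    nlinarith [pow_le_pow_left₀ hδ hab 2, pow_le_pow_left₀ hδ hac 2, pow_le_pow_left₀ hδ hbc 2,
      pow_le_pow_left₀ dist_nonneg ha 2, pow_le_pow_left₀ dist_nonneg hb 2,
      pow_le_pow_left₀ dist_nonneg hc 2, sq_nonneg ‖a - v + (b - v) + (c - v)‖]
  exact le_of_pow_le_pow_left₀ two_ne_zero (by positivity) hsq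

-- The sphere is connected and its two antipodes cannot lie in one ball of radius `R < ρ`.
lemma exists_mem_sphere_covered_twice {P : Set F} (hfin : P.Finite)
    (hrank : 1 < Module.rank ℝ F) {p : F} {R ρ : ℝ} (hρ : 0 ≤ ρ) (hRρ : R < ρ)
    (hcover : ∀ x ∈ sphere p ρ, ∃ q ∈ P, dist x q ≤ R) :
    ∃ x ∈ sphere p ρ, ∃ q ∈ P, ∃ q' ∈ P, q ≠ q' ∧ dist x q ≤ R ∧ dist x q' ≤ R := by
  have hconn := isConnected_sphere hrank p hρ
  obtain ⟨x₀, hx₀⟩ := hconn.nonempty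
  obtain ⟨q₀, hq₀, hx₀q₀⟩ := hcover x₀ hx₀
  set T := ⋃ q ∈ P \ {q₀}, closedBall q R
  have hsub : sphere p ρ ⊆ closedBall q₀ R ∪ T := by
    intro x hx
    obtain ⟨q, hq, hxq⟩ := hcover x hx
    rcases eq_or_ne q q₀ with rfl | hne
    · exact Or.inl hxq
    · exact Or.inr (Set.mem_biUnion ⟨hq, hne⟩ hxq)
  have hT : (sphere p ρ ∩ T).Nonempty := by
    by_contra hempty
    set x₁ := p - (x₀ - p)
    have hx₁ : x₁ ∈ sphere p ρ := by
      rw [mem_sphere, dist_eq_norm, sub_sub_cancel_left, norm_neg, ← dist_eq_norm, ← mem_sphere]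
      exact hx₀
    have hx₁q₀ : dist x₁ q₀ ≤ R :=
      ((hsub hx₁).resolve_right fun h => hempty ⟨x₁, hx₁, h⟩)
    have hx₀x₁ : dist x₀ x₁ = 2 * ρ := by
      rw [dist_eq_norm, show x₀ - x₁ = (2 : ℝ) • (x₀ - p) by simp only [x₁]; module, norm_smul,
        ← dist_eq_norm, mem_sphere.1 hx₀]
      norm_num
    linarith [dist_triangle x₀ q₀ x₁, dist_comm q₀ x₁, mem_closedBall.1 hx₀q₀]
  obtain ⟨x, hx, hxq₀, hxT⟩ := isPreconnected_closed_iff.1 hconn.isPreconnected _ _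
    isClosed_closedBall (hfin.sdiff.isClosed_biUnion fun _ _ => isClosed_closedBall) hsub
    ⟨x₀, hx₀, hx₀q₀⟩ hT
  obtain ⟨q, ⟨hqP, hqne⟩, hxq⟩ := Set.mem_iUnion₂.1 hxT
  exact ⟨x, hx, q₀, hq₀, q, hqP, Ne.symm hqne, hxq₀, hxq⟩

end InnerProductSpace

local notation "E2" => EuclideanSpace ℝ (Fin 2)

lemma convex_unitSquare : Convex ℝ unitSquare := by
  intro x hx y hy a b ha hb hab i
  exact convex_Icc 0 1 (hx i) (hy i) ha hb hab

lemma isCompact_unitSquare : IsCompact unitSquare := by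
  have : unitSquare = WithLp.toLp 2 '' Set.univ.pi fun _ : Fin 2 => Set.Icc (0 : ℝ) 1 := by
    ext x
    exact ⟨fun hx => ⟨x.ofLp, fun i _ => hx i, rfl⟩, by rintro ⟨y, hy, rfl⟩ i; exact hy i trivial⟩
  rw [this]
  exact (isCompact_univ_pi fun _ => isCompact_Icc).image (PiLp.continuous_toLp 2 _)

lemma closedBall_subset_unitSquare : closedBall !₂[(1 : ℝ) / 2, 1 / 2] (1 / 2) ⊆ unitSquare := by
  intro x hx i
  have h := (PiLp.dist_apply_le x !₂[(1 : ℝ) / 2, 1 / 2] i).trans (mem_closedBall.1 hx)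
  have hc : (!₂[(1 : ℝ) / 2, 1 / 2]) i = 1 / 2 := by fin_cases i <;> rfl
  rw [hc, Real.dist_eq, abs_le] at h
  constructor <;> linarith

lemma one_lt_rank_euclideanSpace_fin_two : 1 < Module.rank ℝ E2 := by
  rw [← Module.finrank_eq_rank, finrank_euclideanSpace_fin]
  norm_num

lemma exists_dist_sq_lt_of_sq_lt_ncard {P : Set E2} (hsub : P ⊆ unitSquare) (hfin : P.Finite)
    {n : ℕ} (hn : 0 < n) (hcard : (n + 1) ^ 2 < P.ncard) :
    ∃ p ∈ P, ∃ q ∈ P, p ≠ q ∧ dist p q ^ 2 < 2 / n ^ 2 := by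
  classical
  set cell : E2 → ℤ × ℤ := fun x => (⌊n * x 0⌋, ⌊n * x 1⌋)
  have hmaps : ∀ x ∈ hfin.toFinset, cell x ∈ Finset.Icc (0 : ℤ) n ×ˢ Finset.Icc (0 : ℤ) n := by
    intro x hx
    have hx := hsub (hfin.mem_toFinset.1 hx)
    have hfloor : ∀ i, ⌊(n : ℝ) * x i⌋ ∈ Finset.Icc (0 : ℤ) n := fun i =>
      Finset.mem_Icc.2 ⟨Int.floor_nonneg.2 (mul_nonneg n.cast_nonneg (hx i).1),
        (Int.floor_le_floor (mul_le_of_le_one_right n.cast_nonneg (hx i).2)).trans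
          (Int.floor_natCast n).le⟩
    exact Finset.mem_product.2 ⟨hfloor 0, hfloor 1⟩
  have hlt : (Finset.Icc (0 : ℤ) n ×ˢ Finset.Icc (0 : ℤ) n).card < hfin.toFinset.card := by
    rw [← Set.ncard_eq_toFinset_card P hfin, Finset.card_product, Int.card_Icc,
      show ((n : ℤ) + 1 - 0).toNat = n + 1 by omega, ← sq]
    exact hcard
  obtain ⟨p, hp, q, hq, hpq, hcell⟩ := Finset.exists_ne_map_eq_of_card_lt_of_maps_to hlt hmaps
  refine ⟨p, hfin.mem_toFinset.1 hp, q, hfin.mem_toFinset.1 hq, hpq, ?_⟩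
  have h0 := Int.abs_sub_lt_one_of_floor_eq_floor (congrArg Prod.fst hcell)
  have h1 := Int.abs_sub_lt_one_of_floor_eq_floor (congrArg Prod.snd hcell)
  rw [EuclideanSpace.dist_eq, Real.sq_sqrt (by positivity), Fin.sum_univ_two, Real.dist_eq,
    Real.dist_eq, sq_abs, sq_abs, lt_div_iff₀ (by positivity)]
  rw [← mul_sub, abs_mul, Nat.abs_cast] at h0 h1
  have e0 := pow_lt_one₀ (by positivity) h0 two_ne_zero
  have e1 := pow_lt_one₀ (by positivity) h1 two_ne_zero
  rw [mul_pow, sq_abs] at e0 e1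
  linarith

lemma two_div_sqrt_three_mul_minGap_le_of_maxGap_lt {P : Set E2} (hfin : P.Finite)
    (hP : P.Nonempty) (hR : maxGap unitSquare P < 1 / 4) :
    2 / √3 * minGap P ≤ maxGap unitSquare P := by
  set R := maxGap unitSquare P
  set c : E2 := !₂[(1 : ℝ) / 2, 1 / 2]
  have hcover : ∀ x ∈ unitSquare, ∃ q ∈ P, dist x q ≤ R := fun x hx => by
    obtain ⟨q, hq, h⟩ := hfin.isCompact.exists_infDist_eq_dist hP x
    exact ⟨q, hq, h ▸ infDist_le_maxGap isCompact_unitSquare.isBounded hP hx⟩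
  obtain ⟨p, hp, hcp⟩ :=
    hcover c (closedBall_subset_unitSquare (mem_closedBall_self (by norm_num)))
  by_contra! hlt
  obtain ⟨ρ, hRρ, hρ⟩ := exists_between (lt_min hlt hR)
  have hsphere : sphere p ρ ⊆ unitSquare := fun x hx => closedBall_subset_unitSquare <| by
    rw [mem_closedBall]
    linarith [dist_triangle x p c, mem_sphere.1 hx, dist_comm c p,
      min_le_right (2 / √3 * minGap P) (1 / 4)]
  have hR0 : 0 ≤ R := dist_nonneg.trans hcp
  obtain ⟨x, hx, q, hq, q', hq', hqq', hxq, hxq'⟩ :=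
    exists_mem_sphere_covered_twice hfin one_lt_rank_euclideanSpace_fin_two (hR0.trans hRρ.le)
      hRρ fun x hx => hcover x (hsphere hx)
  have hxp : dist x p = ρ := mem_sphere.1 hx
  have hqp : q ≠ p := by rintro rfl; linarith
  have hq'p : q' ≠ p := by rintro rfl; linarith
  have h := le_sqrt_three_mul_of_dist_le (v := x) (by linarith [minGap_nonneg P])
    (two_mul_minGap_le_dist hp hq hqp.symm) (two_mul_minGap_le_dist hp hq' hq'p.symm)
    (two_mul_minGap_le_dist hq hq' hqq') (by rw [dist_comm, hxp]) (by rw [dist_comm]; linarith)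
    (by rw [dist_comm]; linarith)
  have hρr : ρ * √3 < 2 * minGap P := by
    rw [← lt_div_iff₀ (by positivity), ← div_mul_eq_mul_div]
    exact hρ.trans_le (min_le_left _ _)
  linarith

lemma two_div_sqrt_three_mul_minGap_le_maxGap {P : Set E2} (hsub : P ⊆ unitSquare)
    (hfin : P.Finite) (hcard : 25 < P.ncard) : 2 / √3 * minGap P ≤ maxGap unitSquare P := by
  rcases lt_or_ge (maxGap unitSquare P) (1 / 4) with hR | hR
  · exact two_div_sqrt_three_mul_minGap_le_of_maxGap_lt hfin
      (Set.nonempty_of_ncard_ne_zero (by omega)) hR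
  obtain ⟨p, hp, q, hq, hpq, hd⟩ :=
    exists_dist_sq_lt_of_sq_lt_ncard hsub hfin four_pos (by norm_num; omega)
  have h2r :=
    pow_le_pow_left₀ (by linarith [minGap_nonneg P]) (two_mul_minGap_le_dist hp hq hpq) 2
  have hsqrt : (3 / 2 : ℝ) ≤ √3 := Real.le_sqrt_of_sq_le (by norm_num)
  refine le_trans ?_ hR
  rw [div_mul_eq_mul_div, div_le_iff₀ (by positivity)]
  nlinarith [minGap_nonneg P]

lemma three_rpow_le_two_rpow : (3 : ℝ) ^ ((3 : ℝ) / 4) ≤ 2 ^ ((3 : ℝ) / 2) := calc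
  (3 : ℝ) ^ ((3 : ℝ) / 4) ≤ 4 ^ ((3 : ℝ) / 4) :=
      Real.rpow_le_rpow (by norm_num) (by norm_num) (by norm_num)
  _ = 2 ^ ((3 : ℝ) / 2) := by
    rw [show (4 : ℝ) = 2 ^ (2 : ℝ) by norm_num, ← Real.rpow_mul zero_le_two]
    norm_num

lemma two_div_sqrt_three_sub_div_sqrt_le_one {k : ℕ} (hk : 0 < k) (hk25 : k ≤ 25) :
    2 / √3 - ((2 : ℝ) ^ ((3 : ℝ) / 2) / (3 : ℝ) ^ ((3 : ℝ) / 4)) / √k ≤ 1 := by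
  have hC : 1 ≤ (2 : ℝ) ^ ((3 : ℝ) / 2) / (3 : ℝ) ^ ((3 : ℝ) / 4) :=
    (one_le_div (by positivity)).2 three_rpow_le_two_rpow
  have hk5 : √k ≤ 5 := Real.sqrt_le_iff.2 ⟨by norm_num, by norm_num; exact_mod_cast hk25⟩
  have hCk : 1 / 5 ≤ ((2 : ℝ) ^ ((3 : ℝ) / 2) / (3 : ℝ) ^ ((3 : ℝ) / 4)) / √k :=
    div_le_div₀ (by positivity) hC (by positivity) hk5
  have hsqrt : 2 / √3 ≤ 6 / 5 := by
    rw [div_le_div_iff₀ (by positivity) (by norm_num)]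
    nlinarith [Real.le_sqrt_of_sq_le (show (5 / 3 : ℝ) ^ 2 ≤ 3 by norm_num)]
  linarith

/-- Lower bound on the gap ratio of a set of `k ≥ 2` points in the unit square:
`GR_P ≥ 2/√3 − C/√k` with `C = 2^{3/2}/3^{3/4}`. -/
theorem stmt1 (k : ℕ) (hk : 2 ≤ k) (P : Set (EuclideanSpace ℝ (Fin 2)))
    (hsub : P ⊆ unitSquare) (hcard : P.ncard = k) :
    2 / Real.sqrt 3 - ((2:ℝ) ^ ((3:ℝ)/2) / (3:ℝ) ^ ((3:ℝ)/4)) / Real.sqrt k ≤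
      gapRatio unitSquare P := by
  have hfin : P.Finite := Set.finite_of_ncard_pos (by omega)
  have hP : P.Nontrivial := (Set.one_lt_ncard hfin).1 (by omega)
  rw [gapRatio, le_div_iff₀ (minGap_pos hfin hP)]
  rcases le_or_gt k 25 with hsmall | hlarge
  · calc _ ≤ 1 * minGap P := mul_le_mul_of_nonneg_right
          (two_div_sqrt_three_sub_div_sqrt_le_one (by omega) hsmall) (minGap_nonneg P)
      _ ≤ maxGap unitSquare P := by
          rw [one_mul]
          exact minGap_le_maxGap convex_unitSquare isCompact_unitSquare.isBounded hsub hfin hP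
  · calc _ ≤ 2 / √3 * minGap P :=
          mul_le_mul_of_nonneg_right (sub_le_self _ (by positivity)) (minGap_nonneg P)
      _ ≤ maxGap unitSquare P := two_div_sqrt_three_mul_minGap_le_maxGap hsub hfin (by omega)
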